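/- arXiv:2008.11018 — 2 statements merged into one kernel-verified Lean document; each statement's English description precedes it below -/
import Mathlib

section
/- Let n ≥ 2 and 1 ≤ r ≤ n−1. For every λ ∈ Γ_r one has H₁(λ)·H_r(λ) ≥ H_{r+1}(λ). -/
/-- The `k`-th elementary symmetric function of `l = (l 0, …, l (n-1)) ∈ ℝⁿ`. -/
noncomputable def esymm (n k : ℕ) (l : Fin n → ℝ) : ℝ :=
  ∑ s ∈ Finset.powersetCard k (Finset.univ : Finset (Fin n)), ∏ i ∈ s, l i

/-- The normalized `k`-th mean curvature function `H_k(λ) = σ_k(λ) / C(n,k)`. -/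
noncomputable def meanH (n k : ℕ) (l : Fin n → ℝ) : ℝ :=
  esymm n k l / (n.choose k : ℝ)

/-- The Gårding cone `Γ_k ⊆ ℝⁿ`: the connected component of `{λ : σ_k(λ) > 0}`
containing the vector `(1,…,1)`. -/
noncomputable def gardingCone (n k : ℕ) : Set (Fin n → ℝ) :=
  connectedComponentIn {l : Fin n → ℝ | 0 < esymm n k l} (fun _ => 1)

/-! Newton's inequality `H_j H_{j+2} ≤ H_{j+1}²` holds for every real `λ`. Differentiating
`∏ (X - λᵢ)` keeps it real-rooted (Rolle) and preserves `H_0, …, H_{n-1}` of its roots, so one may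
assume `λ` has exactly `j + 2` entries; passing to the reciprocals `1/λᵢ` then turns the
inequality into `H₂ ≤ H₁²`, which is Cauchy–Schwarz.

On `Γ_r` all of `H₁, …, H_r` are positive. Indeed `{σ_r > 0}` is covered by the disjoint open
sets `{H_k > 0 for all k ≤ r}` and `{H_k < 0 for some k < r}`: if `H_k(λ) ≥ 0` for `k < r` and
`H_r(λ) > 0`, differentiating reduces `λ` to `r` numbers `tᵢ` for which
`∏ (y + tᵢ) = ∑ σ_k y^{r-k}` is positive for `y ≥ 0`, so every `tᵢ` is positive. Chaining
Newton's inequalities along the positive sequence `H_0 = 1, H_1, …, H_r` gives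
`H_{k+1} ≤ H_1 H_k` for all `k ≤ r`. -/

open Polynomial

namespace Multiset

section CommSemiring

variable {R : Type*} [CommSemiring R]

@[simp]
theorem esymm_zero (s : Multiset R) : s.esymm 0 = 1 := by
  simp [esymm]

theorem esymm_one (s : Multiset R) : s.esymm 1 = s.sum := by
  simp [esymm, powersetCard_one, map_map]

theorem esymm_cons_succ (a : R) (s : Multiset R) (k : ℕ) :
    (a ::ₘ s).esymm (k + 1) = s.esymm (k + 1) + a * s.esymm k := by
  simp [esymm, map_map, sum_map_mul_left]

theorem esymm_eq_zero_of_card_lt {s : Multiset R} {k : ℕ} (h : card s < k) : s.esymm k = 0 := by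
  simp [esymm, powersetCard_eq_empty _ h]

@[simp]
theorem esymm_card (s : Multiset R) : s.esymm (card s) = s.prod := by
  simp [esymm]

end CommSemiring

theorem sq_sum_eq_sum_sq_add_two_mul_esymm_two {R : Type*} [CommRing R] (s : Multiset R) :
    s.sum ^ 2 = (s.map (· ^ 2)).sum + 2 * s.esymm 2 := by
  induction s using Multiset.induction with
  | empty => simp [esymm_eq_zero_of_card_lt (s := (0 : Multiset R)) (k := 2) (by simp)]
  | cons a s ih =>
    rw [esymm_cons_succ, esymm_one]
    simp only [sum_cons, map_cons]
    linear_combination ih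

theorem esymm_map_inv_mul_prod {K : Type*} [Field K] {s : Multiset K} (hs : ∀ x ∈ s, x ≠ 0)
    {k l : ℕ} (h : k + l = card s) : (s.map (·⁻¹)).esymm k * s.prod = s.esymm l := by
  induction s using Multiset.induction generalizing k l with
  | empty => simp_all
  | cons a s ih =>
    have ha : a ≠ 0 := hs a (mem_cons_self a s)
    have ih := @ih fun x hx => hs x (mem_cons_of_mem hx)
    rw [card_cons] at h
    rcases k with _ | k <;> rcases l with _ | l
    · omega
    · rw [show l + 1 = card (a ::ₘ s) by simp [← h], esymm_card]
      simp
    · have htop : (s.map (·⁻¹)).esymm (k + 1) = 0 := esymm_eq_zero_of_card_lt (by simp; omega)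
      rw [map_cons, esymm_cons_succ, htop, prod_cons, esymm_zero, ← esymm_zero s,
        ← ih (k := k) (by omega)]
      field_simp
      ring
    · rw [map_cons, esymm_cons_succ, esymm_cons_succ, prod_cons, ← ih (k := k + 1) (l := l)
        (by omega), ← ih (k := k) (l := l + 1) (by omega)]
      field_simp
      ring

section OrderedRing

variable {R : Type*} [CommRing R] [LinearOrder R] [IsStrictOrderedRing R]

theorem pos_of_esymm_nonneg {s : Multiset R} (hs : ∀ k < card s, 0 ≤ s.esymm k)
    (hprod : 0 < s.prod) {x : R} (hx : x ∈ s) : 0 < x := by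
  by_contra! hx0
  have hvieta := congrArg (eval (-x)) (prod_X_add_C_eq_sum_esymm s)
  have hroot : eval (-x) (s.map fun r => X + C r).prod = 0 := by
    rw [eval_multiset_prod]
    exact prod_eq_zero (mem_map.mpr ⟨_, mem_map.mpr ⟨x, hx, rfl⟩, by simp⟩)
  have hsum : 0 < ∑ j ∈ Finset.range (card s + 1), s.esymm j * (-x) ^ (card s - j) := by
    rw [Finset.sum_range_succ, Nat.sub_self, pow_zero, mul_one, esymm_card]
    refine add_pos_of_nonneg_of_pos (Finset.sum_nonneg fun j hj => ?_) hprod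
    exact mul_nonneg (hs j (Finset.mem_range.mp hj)) (pow_nonneg (by linarith) _)
  simp only [hroot, eval_finsetSum, eval_mul, eval_C, eval_pow, eval_X] at hvieta
  linarith

theorem esymm_pos {s : Multiset R} (hs : ∀ x ∈ s, 0 < x) {k : ℕ} (hk : k ≤ card s) :
    0 < s.esymm k := by
  have hne : powersetCard k s ≠ 0 := card_pos.mp (by simpa using Nat.choose_pos hk)
  have := sum_lt_sum_of_nonempty (f := fun _ => (0 : R)) (g := prod) hne fun u hu =>
    prod_pos fun x hx => hs x (mem_of_le (mem_powersetCard.mp hu).1 hx)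
  simpa [esymm] using this

end OrderedRing

theorem sq_sum_le_card_mul_sum_sq {K : Type*} [Field K] [LinearOrder K] [IsStrictOrderedRing K]
    (s : Multiset K) : s.sum ^ 2 ≤ card s * (s.map (· ^ 2)).sum := by
  rcases eq_or_ne s 0 with rfl | hs
  · simp
  have hm : (0 : K) < card s := by exact_mod_cast card_pos.mpr hs
  have hsq : 0 ≤ (s.map fun x => (card s * x - s.sum) ^ 2).sum :=
    sum_nonneg fun y hy => by obtain ⟨x, -, rfl⟩ := mem_map.mp hy; positivity
  have hexpand : (s.map fun x => (card s * x - s.sum) ^ 2).sum =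
      card s * (card s * (s.map (· ^ 2)).sum - s.sum ^ 2) := by
    have hlin : (s.map fun x => (card s : K) * x).sum = card s * s.sum := by
      rw [sum_map_mul_left, map_id']
    simp only [sub_sq, sum_map_add, sum_map_sub, sum_map_mul_right, hlin, map_const',
      sum_replicate, nsmul_eq_mul, mul_pow, sum_map_mul_left]
    ring
  nlinarith

noncomputable def esymmMean (s : Multiset ℝ) (k : ℕ) : ℝ :=
  s.esymm k / (card s).choose k

@[simp]
theorem esymmMean_zero (s : Multiset ℝ) : s.esymmMean 0 = 1 := by
  simp [esymmMean]

theorem esymmMean_card (s : Multiset ℝ) : s.esymmMean (card s) = s.prod := by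
  simp [esymmMean]

theorem esymmMean_eq_zero_of_card_lt {s : Multiset ℝ} {k : ℕ} (h : card s < k) :
    s.esymmMean k = 0 := by
  simp [esymmMean, esymm_eq_zero_of_card_lt h]

theorem esymm_eq_choose_mul_esymmMean {s : Multiset ℝ} {k : ℕ} (h : k ≤ card s) :
    s.esymm k = (card s).choose k * s.esymmMean k := by
  have : ((card s).choose k : ℝ) ≠ 0 := by exact_mod_cast (Nat.choose_pos h).ne'
  rw [esymmMean, mul_div_cancel₀ _ this]

theorem esymmMean_pos_iff {s : Multiset ℝ} {k : ℕ} : 0 < s.esymmMean k ↔ 0 < s.esymm k := by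
  rcases le_or_gt k (card s) with h | h
  · exact div_pos_iff_of_pos_right (by exact_mod_cast Nat.choose_pos h)
  · simp [esymmMean, esymm_eq_zero_of_card_lt h]

theorem esymmMean_two_le_sq (s : Multiset ℝ) : s.esymmMean 2 ≤ s.esymmMean 1 ^ 2 := by
  rcases lt_or_ge (card s) 2 with h | h
  · rw [esymmMean_eq_zero_of_card_lt h]
    positivity
  have hm : (2 : ℝ) ≤ card s := by exact_mod_cast h
  have hcs := sq_sum_le_card_mul_sum_sq s
  have hsq := sq_sum_eq_sum_sq_add_two_mul_esymm_two s
  rw [esymmMean, esymmMean, Nat.cast_choose_two, Nat.choose_one_right, esymm_one,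
    div_pow, div_le_div_iff₀ (by nlinarith) (by positivity)]
  nlinarith [sq_nonneg s.sum]

theorem esymmMean_map_inv_mul_prod {s : Multiset ℝ} (hs : ∀ x ∈ s, x ≠ 0) {k l : ℕ}
    (h : k + l = card s) : (s.map (·⁻¹)).esymmMean k * s.prod = s.esymmMean l := by
  rw [esymmMean, esymmMean, card_map, Nat.choose_symm_of_eq_add h.symm, div_mul_eq_mul_div,
    esymm_map_inv_mul_prod hs h]

end Multiset

namespace Polynomial

theorem card_roots_derivative {p : ℝ[X]} (hp : Multiset.card p.roots = p.natDegree) :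
    Multiset.card (derivative p).roots = (derivative p).natDegree := by
  have hle := card_roots' (derivative p)
  have hrolle := card_roots_le_derivative p
  rw [natDegree_derivative] at hle ⊢
  omega

theorem natDegree_mul_esymm_roots_derivative {p : ℝ[X]}
    (hp : Multiset.card p.roots = p.natDegree) {j : ℕ} (hj : j < p.natDegree) :
    p.natDegree * (derivative p).roots.esymm j = (p.natDegree - j : ℕ) * p.roots.esymm j := by
  obtain ⟨m, hm⟩ : ∃ m, p.natDegree = m + 1 := ⟨p.natDegree - 1, by omega⟩
  have hp0 : p.leadingCoeff ≠ 0 := leadingCoeff_ne_zero.mpr (ne_zero_of_natDegree_gt hj)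
  have hdeg' : (derivative p).natDegree = m := by rw [natDegree_derivative, hm]; rfl
  have hcoeff' := coeff_eq_esymm_roots_of_card (card_roots_derivative hp) (k := m - j) (by omega)
  have hcoeff := coeff_eq_esymm_roots_of_card hp (k := m - j + 1) (by omega)
  rw [coeff_derivative, hcoeff, leadingCoeff_derivative, hdeg', hm] at hcoeff'
  rw [show m + 1 - (m - j + 1) = j by omega, show m - (m - j) = j by omega] at hcoeff'
  rw [hm, show m + 1 - j = m - j + 1 by omega]
  have hsign : p.leadingCoeff * (-1) ^ j ≠ 0 := mul_ne_zero hp0 (by simp)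
  apply mul_left_cancel₀ hsign
  push_cast at hcoeff' ⊢
  linear_combination -hcoeff'

theorem esymmMean_roots_derivative {p : ℝ[X]} (hp : Multiset.card p.roots = p.natDegree)
    {j : ℕ} (hj : j < p.natDegree) :
    (derivative p).roots.esymmMean j = p.roots.esymmMean j := by
  obtain ⟨m, hm⟩ : ∃ m, p.natDegree = m + 1 := ⟨p.natDegree - 1, by omega⟩
  have hesymm := natDegree_mul_esymm_roots_derivative hp hj
  have hchoose := Nat.choose_mul_succ_eq m j
  have hcard' : Multiset.card (derivative p).roots = m := by
    rw [card_roots_derivative hp, natDegree_derivative, hm]; rfl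
  rw [hm] at hesymm
  rw [Multiset.esymmMean, Multiset.esymmMean, hcard', hp, hm,
    div_eq_div_iff (by exact_mod_cast (Nat.choose_pos (by omega)).ne')
      (by exact_mod_cast (Nat.choose_pos (by omega)).ne')]
  have hpos : (0 : ℝ) < (m + 1 - j : ℕ) := by exact_mod_cast (by omega : 0 < m + 1 - j)
  apply mul_left_cancel₀ hpos.ne'
  have hchooseR : (m.choose j : ℝ) * (m + 1) = (m + 1).choose j * (m + 1 - j : ℕ) := by
    exact_mod_cast hchoose
  push_cast at hesymm
  linear_combination (m.choose j : ℝ) * hesymm - (derivative p).roots.esymm j * hchooseR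

end Polynomial

namespace Multiset

theorem exists_card_eq_esymmMean_eq (s : Multiset ℝ) {m : ℕ} (hm : m ≤ card s) :
    ∃ t : Multiset ℝ, card t = m ∧ ∀ j ≤ m, t.esymmMean j = s.esymmMean j := by
  obtain ⟨d, hd⟩ := Nat.exists_eq_add_of_le hm
  induction d generalizing s with
  | zero => exact ⟨s, hd, fun _ _ => rfl⟩
  | succ d ih =>
    set p : ℝ[X] := (s.map fun a => X - C a).prod
    have hroots : p.roots = s := roots_multiset_prod_X_sub_C s
    have hdeg : p.natDegree = card s := natDegree_multiset_prod_X_sub_C_eq_card s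
    have hp : card p.roots = p.natDegree := by rw [hroots, hdeg]
    have hcard : card (derivative p).roots = m + d := by
      rw [card_roots_derivative hp, natDegree_derivative, hdeg, hd]; rfl
    obtain ⟨t, ht, htj⟩ := ih _ (by omega) hcard
    refine ⟨t, ht, fun j hj => ?_⟩
    rw [htj j hj, esymmMean_roots_derivative hp (by omega), hroots]

theorem esymmMean_mul_esymmMean_le_sq_of_card_eq {t : Multiset ℝ} {j : ℕ} (ht : card t = j + 2) :
    t.esymmMean j * t.esymmMean (j + 2) ≤ t.esymmMean (j + 1) ^ 2 := by
  have htop : t.esymmMean (j + 2) = t.prod := ht ▸ esymmMean_card t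
  rcases eq_or_ne t.prod 0 with h0 | h0
  · rw [htop, h0, mul_zero]
    positivity
  have hne : ∀ x ∈ t, x ≠ 0 := fun x hx hx0 => h0 (prod_eq_zero (hx0 ▸ hx))
  rw [htop, ← esymmMean_map_inv_mul_prod hne (k := 2) (by omega),
    ← esymmMean_map_inv_mul_prod hne (k := 1) (by omega)]
  calc (t.map (·⁻¹)).esymmMean 2 * t.prod * t.prod
      = (t.map (·⁻¹)).esymmMean 2 * t.prod ^ 2 := by ring
    _ ≤ (t.map (·⁻¹)).esymmMean 1 ^ 2 * t.prod ^ 2 := by gcongr; exact esymmMean_two_le_sq _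
    _ = ((t.map (·⁻¹)).esymmMean 1 * t.prod) ^ 2 := by ring

theorem esymmMean_mul_esymmMean_le_sq (s : Multiset ℝ) (j : ℕ) :
    s.esymmMean j * s.esymmMean (j + 2) ≤ s.esymmMean (j + 1) ^ 2 := by
  rcases lt_or_ge (card s) (j + 2) with h | h
  · rw [esymmMean_eq_zero_of_card_lt h, mul_zero]
    positivity
  obtain ⟨t, ht, htj⟩ := exists_card_eq_esymmMean_eq s h
  rw [← htj j (by omega), ← htj (j + 1) (by omega), ← htj (j + 2) le_rfl]
  exact esymmMean_mul_esymmMean_le_sq_of_card_eq ht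

theorem esymmMean_pos_of_nonneg {s : Multiset ℝ} {r : ℕ} (hnonneg : ∀ k < r, 0 ≤ s.esymmMean k)
    (hr : 0 < s.esymmMean r) {k : ℕ} (hk : k ≤ r) : 0 < s.esymmMean k := by
  have hrs : r ≤ card s := by
    by_contra! h
    exact hr.ne' (esymmMean_eq_zero_of_card_lt h)
  obtain ⟨t, ht, htj⟩ := exists_card_eq_esymmMean_eq s hrs
  have htpos : ∀ x ∈ t, 0 < x := by
    refine fun x hx => pos_of_esymm_nonneg (fun j hj => ?_) ?_ hx
    · rw [esymm_eq_choose_mul_esymmMean hj.le, htj j (by omega)]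
      exact mul_nonneg (Nat.cast_nonneg _) (hnonneg j (by omega))
    · rw [← esymmMean_card, ht, htj r le_rfl]
      exact hr
  rw [← htj k hk, esymmMean_pos_iff]
  exact esymm_pos htpos (by omega)

end Multiset

theorem le_apply_one_mul_of_logConcave {a : ℕ → ℝ} {r : ℕ} (h0 : a 0 = 1)
    (hconc : ∀ k < r, a k * a (k + 2) ≤ a (k + 1) ^ 2) (hpos : ∀ k ≤ r, 0 < a k) :
    ∀ k ≤ r, a (k + 1) ≤ a 1 * a k := by
  intro k hk
  induction k with
  | zero => rw [h0, mul_one]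
  | succ k ih =>
    refine le_of_mul_le_mul_right ?_ (hpos k (by omega))
    calc a (k + 2) * a k = a k * a (k + 2) := mul_comm _ _
      _ ≤ a (k + 1) * a (k + 1) := by rw [← sq]; exact hconc k (by omega)
      _ ≤ a (k + 1) * (a 1 * a k) := by gcongr; exacts [(hpos _ hk).le, ih (by omega)]
      _ = a 1 * a (k + 1) * a k := by ring

theorem meanH_eq_esymmMean (n k : ℕ) (l : Fin n → ℝ) :
    meanH n k l = (Finset.univ.val.map l).esymmMean k := by
  rw [meanH, Multiset.esymmMean, esymm, Finset.esymm_map_val]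
  simp

theorem meanH_pos_iff {n k : ℕ} {l : Fin n → ℝ} : 0 < meanH n k l ↔ 0 < esymm n k l := by
  rw [meanH_eq_esymmMean, Multiset.esymmMean_pos_iff, esymm, Finset.esymm_map_val]

theorem continuous_meanH (n k : ℕ) : Continuous (meanH n k) := by
  unfold meanH esymm
  fun_prop

theorem meanH_one {n k : ℕ} (hk : k ≤ n) : meanH n k (fun _ => 1) = 1 := by
  have : (n.choose k : ℝ) ≠ 0 := by exact_mod_cast (Nat.choose_pos hk).ne'
  simp [meanH, esymm, this]

theorem setOf_esymm_pos_subset (n r : ℕ) :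
    {l : Fin n → ℝ | 0 < esymm n r l} ⊆
      {l | ∀ k ≤ r, 0 < meanH n k l} ∪ {l | ∃ k < r, meanH n k l < 0} := by
  intro l hl
  by_cases hneg : ∃ k < r, meanH n k l < 0
  · exact Or.inr hneg
  push Not at hneg
  refine Or.inl fun k hk => ?_
  simp only [meanH_eq_esymmMean] at hneg ⊢
  refine Multiset.esymmMean_pos_of_nonneg hneg ?_ hk
  rw [← meanH_eq_esymmMean, meanH_pos_iff]
  exact hl

theorem le_of_mem_gardingCone {n r : ℕ} {l : Fin n → ℝ} (hl : l ∈ gardingCone n r) : r ≤ n := by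
  have hlU : l ∈ {l : Fin n → ℝ | 0 < esymm n r l} := connectedComponentIn_subset _ _ hl
  have hlr : 0 < meanH n r l := meanH_pos_iff.mpr hlU
  by_contra! h
  rw [meanH_eq_esymmMean, Multiset.esymmMean_eq_zero_of_card_lt (by simpa using h)] at hlr
  exact hlr.false

theorem meanH_pos_of_mem_gardingCone {n r : ℕ} {l : Fin n → ℝ} (hl : l ∈ gardingCone n r)
    {k : ℕ} (hk : k ≤ r) : 0 < meanH n k l := by
  have hrn := le_of_mem_gardingCone hl
  set V := {l : Fin n → ℝ | ∀ k ≤ r, 0 < meanH n k l}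
  set W := {l : Fin n → ℝ | ∃ k < r, meanH n k l < 0}
  have hV : IsOpen V := by
    rw [show V = ⋂ k ∈ Set.Iic r, {l | 0 < meanH n k l} by ext; simp [V]]
    exact (Set.finite_Iic r).isOpen_biInter fun k _ =>
      isOpen_lt continuous_const (continuous_meanH n k)
  have hW : IsOpen W := by
    rw [show W = ⋃ k ∈ Set.Iio r, {l | meanH n k l < 0} by ext; simp [W]]
    exact isOpen_biUnion fun k _ => isOpen_lt (continuous_meanH n k) continuous_const
  have hVW : Disjoint V W := Set.disjoint_left.mpr fun _ hl ⟨k, hkr, hk⟩ => (hl k hkr.le).not_gt hk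
  have hone : (fun _ => 1) ∈ gardingCone n r :=
    mem_connectedComponentIn (meanH_pos_iff.mp (by rw [meanH_one hrn]; exact one_pos))
  have hsub := isPreconnected_connectedComponentIn.subset_left_of_subset_union hV hW hVW
    ((connectedComponentIn_subset _ _).trans (setOf_esymm_pos_subset n r))
    ⟨_, hone, fun k hk => by rw [meanH_one (hk.trans hrn)]; exact one_pos⟩
  exact hsub hl k hk

theorem meanH_mul_ge_general (n r : ℕ) (l : Fin n → ℝ) (hl : l ∈ gardingCone n r) :
    meanH n (r + 1) l ≤ meanH n 1 l * meanH n r l := by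
  refine le_apply_one_mul_of_logConcave (a := fun k => meanH n k l) ?_ (fun k _ => ?_)
    (fun k hk => meanH_pos_of_mem_gardingCone hl hk) r le_rfl
  · simp [meanH_eq_esymmMean]
  · simp only [meanH_eq_esymmMean]
    exact Multiset.esymmMean_mul_esymmMean_le_sq _ k

/-- For `n ≥ 2`, `1 ≤ r ≤ n-1` and `λ ∈ Γ_r` one has `H₁(λ)·H_r(λ) ≥ H_{r+1}(λ)`. -/
theorem meanH_mul_ge (n r : ℕ) (hn : 2 ≤ n) (hr1 : 1 ≤ r) (hr : r ≤ n - 1)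
    (l : Fin n → ℝ) (hl : l ∈ gardingCone n r) :
    meanH n (r + 1) l ≤ meanH n 1 l * meanH n r l :=
  meanH_mul_ge_general n r l hl
end

section
/- Let n ≥ 2 and 2 ≤ r ≤ n. For every λ ∈ Γ_r one has H_{r−1}(λ) ≥ H_r(λ)^{(r−1)/r} > 0. -/
/-!
Newton's inequalities `H_k H_{k+2} ≤ H_{k+1}²` hold on all of `ℝⁿ`: the polynomial
`∏ (1 + λᵢ X) = ∑ σ_j X^j` is real-rooted, and real-rootedness survives differentiation (Rolle)
and reversal of coefficients, which together cut it down to a real-rooted quadratic with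
coefficients proportional to `σ_k, σ_{k+1}, σ_{k+2}`; its discriminant is the Newton defect.
Where `H_0, …, H_r > 0`, Newton gives the Maclaurin step `H_{k+1}^k ≤ H_k^{k+1}` (`k < r`). Shifting
`λ` to `λ + t(1, …, 1)` with `t > 0` turns `σ_0, …, σ_r ≥ 0` into `σ_0, …, σ_r > 0`, so letting
`t ↓ 0` the step persists where `σ_0, …, σ_r ≥ 0`, and then `σ_r > 0` forces `σ_j > 0` for `j ≤ r`.
Hence `{σ_1, …, σ_r > 0}` is relatively clopen in the connected set `Γ_r`, so it contains `Γ_r`,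
and the step with `k = r - 1` is the claim.
-/

open Polynomial

namespace Polynomial

theorem Splits.reverse {K : Type*} [Field K] {p : K[X]} (hp : p.Splits) : p.reverse.Splits := by
  induction hp using Submonoid.closure_induction with
  | mem q hq =>
    refine Splits.of_natDegree_le_one ((reverse_natDegree_le q).trans ?_)
    obtain ⟨a, rfl⟩ | ⟨a, rfl⟩ := hq
    · exact (natDegree_C a).trans_le zero_le_one
    · exact (natDegree_X_add_C a).le
  | one => simpa only [← C_1, reverse_C] using Splits.C 1
  | mul f g _ _ hf hg => simpa [reverse_mul_of_domain] using hf.mul hg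

theorem reflect_eq_reverse_mul_X_pow {R : Type*} [Semiring R] {p : R[X]} {N : ℕ}
    (hN : p.natDegree ≤ N) : p.reflect N = p.reverse * X ^ (N - p.natDegree) := by
  have := reflect_mul p 1 le_rfl (natDegree_one.trans_le (Nat.zero_le (N - p.natDegree)))
  rwa [mul_one, Nat.add_sub_cancel' hN, reflect_one] at this

theorem Splits.reflect {K : Type*} [Field K] {p : K[X]} (hp : p.Splits) {N : ℕ}
    (hN : p.natDegree ≤ N) : (p.reflect N).Splits := by
  rw [reflect_eq_reverse_mul_X_pow hN]
  exact hp.reverse.mul (Splits.X_pow _)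

theorem Splits.derivative {p : ℝ[X]} (hp : p.Splits) : (Polynomial.derivative p).Splits := by
  rw [splits_iff_card_roots] at hp ⊢
  have := p.card_roots_le_derivative
  have := (Polynomial.derivative p).card_roots'
  have := natDegree_derivative_le p
  omega

theorem Splits.hasseDeriv {p : ℝ[X]} (hp : p.Splits) (k : ℕ) :
    (Polynomial.hasseDeriv k p).Splits := by
  have hiter : (Polynomial.derivative^[k] p).Splits := by
    induction k with
    | zero => exact hp
    | succ k ih => simpa only [Function.iterate_succ_apply'] using ih.derivative
  have hfac : (k.factorial : ℝ) • Polynomial.hasseDeriv k p = Polynomial.derivative^[k] p := by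
    rw [← factorial_smul_hasseDeriv, LinearMap.smul_apply, Nat.cast_smul_eq_nsmul]
  have hk : (k.factorial : ℝ) ≠ 0 := Nat.cast_ne_zero.mpr k.factorial_ne_zero
  rw [← inv_smul_smul₀ hk (Polynomial.hasseDeriv k p), hfac, smul_eq_C_mul]
  exact hiter.C_mul _

theorem Splits.four_mul_coeff_two_mul_coeff_zero_le_coeff_one_sq {p : ℝ[X]} (hp : p.Splits)
    (hdeg : p.natDegree ≤ 2) : 4 * p.coeff 2 * p.coeff 0 ≤ p.coeff 1 ^ 2 := by
  by_cases h2 : p.coeff 2 = 0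
  · simp only [h2, mul_zero, zero_mul]; positivity
  have hdeg2 : p.degree ≠ 0 := by
    rw [degree_eq_natDegree (by rintro rfl; simp at h2),
      le_antisymm hdeg (le_natDegree_of_ne_zero h2)]
    decide
  obtain ⟨x, hx⟩ := hp.exists_eval_eq_zero hdeg2
  rw [eval_eq_sum_range' (n := 3) (by omega)] at hx
  simp only [Finset.sum_range_succ, Finset.sum_range_zero, pow_zero, pow_one] at hx
  have hdisc : p.coeff 1 ^ 2 - 4 * p.coeff 2 * p.coeff 0 =
      (2 * p.coeff 2 * x + p.coeff 1) ^ 2 := by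
    linear_combination (-4 * p.coeff 2) * hx
  linarith [sq_nonneg (2 * p.coeff 2 * x + p.coeff 1)]

end Polynomial

theorem esymm_zero (n : ℕ) (l : Fin n → ℝ) : esymm n 0 l = 1 := by
  simp [esymm]

theorem esymm_const_one (n k : ℕ) : esymm n k (fun _ => 1) = n.choose k := by
  simp [esymm]

theorem continuous_esymm (n k : ℕ) : Continuous (esymm n k) := by
  unfold esymm
  fun_prop

theorem coeff_prod_X_add_C_eq_esymm (n : ℕ) {j : ℕ} (hj : j ≤ n) (l : Fin n → ℝ) :
    (∏ i, (X + C (l i))).coeff (n - j) = esymm n j l := by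
  rw [Finset.prod_X_add_C_coeff _ _ (by simp), Finset.card_univ, Fintype.card_fin,
    Nat.sub_sub_self hj, esymm]

theorem coeff_reflect_prod_X_add_C_eq_esymm (n : ℕ) {j : ℕ} (hj : j ≤ n) (l : Fin n → ℝ) :
    ((∏ i, (X + C (l i))).reflect n).coeff j = esymm n j l := by
  rw [coeff_reflect, revAt_le hj, coeff_prod_X_add_C_eq_esymm n hj]

theorem natDegree_prod_X_add_C_le (n : ℕ) (l : Fin n → ℝ) :
    (∏ i, (X + C (l i))).natDegree ≤ n :=
  (natDegree_prod_le _ _).trans (by simp)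

theorem esymm_add_const (n : ℕ) {j : ℕ} (hj : j ≤ n) (l : Fin n → ℝ) (t : ℝ) :
    esymm n j (fun i => l i + t) =
      ∑ u ∈ Finset.range (j + 1),
        ((u + (n - j)).choose (n - j) : ℝ) * esymm n (j - u) l * t ^ u := by
  have htaylor : ∏ i, (X + C (l i + t)) = taylor t (∏ i, (X + C (l i))) := by
    simp only [taylor_apply, Polynomial.prod_comp, add_comp, X_comp, C_comp, C_add]
    exact Finset.prod_congr rfl fun i _ => by ring
  rw [← coeff_prod_X_add_C_eq_esymm n hj, htaylor, taylor_coeff,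
    eval_eq_sum_range' (n := j + 1) ((natDegree_hasseDeriv_le _ _).trans_lt
      (by have := natDegree_prod_X_add_C_le n l; omega))]
  refine Finset.sum_congr rfl fun u hu => ?_
  rw [hasseDeriv_coeff, show u + (n - j) = n - (j - u) by
    have := Finset.mem_range.mp hu; omega, coeff_prod_X_add_C_eq_esymm n (by omega)]

theorem esymm_add_const_pos (n : ℕ) {j : ℕ} (hj : j ≤ n) {l : Fin n → ℝ}
    (hl : ∀ i ≤ j, 0 ≤ esymm n i l) {t : ℝ} (ht : 0 < t) :
    0 < esymm n j (fun i => l i + t) := by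
  rw [esymm_add_const n hj]
  refine Finset.sum_pos' (fun u hu => ?_) ⟨j, Finset.self_mem_range_succ j, ?_⟩
  · have := hl (j - u) (Nat.sub_le j u)
    positivity
  · rw [Nat.sub_self, esymm_zero, mul_one]
    exact mul_pos (Nat.cast_pos.mpr (Nat.choose_pos (by omega))) (pow_pos ht j)

theorem esymm_mul_esymm_le (n : ℕ) {k : ℕ} (hk : k + 2 ≤ n) (l : Fin n → ℝ) :
    ((k : ℝ) + 2) * ((n : ℝ) - k) * (esymm n k l * esymm n (k + 2) l) ≤
      ((k : ℝ) + 1) * ((n : ℝ) - k - 1) * esymm n (k + 1) l ^ 2 := by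
  obtain ⟨b, rfl⟩ : ∃ b, n = k + 2 + b := ⟨n - (k + 2), by omega⟩
  set Q := (∏ i, (X + C (l i))).reflect (k + 2 + b)
  have hQdeg : Q.natDegree ≤ k + 2 + b :=
    natDegree_reflect_le.trans (max_le le_rfl (natDegree_prod_X_add_C_le _ l))
  have hQ : Q.Splits :=
    (Splits.prod fun i _ => Splits.X_add_C (l i)).reflect (natDegree_prod_X_add_C_le _ l)
  have hQk : (hasseDeriv k Q).natDegree ≤ b + 2 :=
    (natDegree_hasseDeriv_le Q k).trans (by omega)
  set R := hasseDeriv b ((hasseDeriv k Q).reflect (b + 2))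
  have hR : R.Splits := ((hQ.hasseDeriv k).reflect hQk).hasseDeriv b
  have hRdeg : R.natDegree ≤ 2 :=
    (natDegree_hasseDeriv_le _ b).trans
      (by have := natDegree_reflect_le (N := b + 2) (p := hasseDeriv k Q); omega)
  have hRcoeff : ∀ m ≤ 2, R.coeff m =
      (b + m).choose b * (k + (2 - m)).choose k * esymm (k + 2 + b) (k + (2 - m)) l := by
    intro m hm
    rw [hasseDeriv_coeff, add_comm m b, coeff_reflect, revAt_le (by omega), hasseDeriv_coeff,
      show b + 2 - (b + m) = 2 - m by omega, add_comm (2 - m) k,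
      coeff_reflect_prod_X_add_C_eq_esymm _ (by omega), mul_assoc]
  have hdisc := hR.four_mul_coeff_two_mul_coeff_zero_le_coeff_one_sq hRdeg
  rw [hRcoeff 0 (by norm_num), hRcoeff 1 (by norm_num), hRcoeff 2 (by norm_num)] at hdisc
  have hchoose_one : ∀ a : ℕ, ((a + 1).choose a : ℝ) = a + 1 := fun a => by
    rw [Nat.choose_symm_add, Nat.choose_one_right]; push_cast; ring
  have hchoose_two : ∀ a : ℕ, ((a + 2).choose a : ℝ) = (a + 2) * (a + 1) / 2 := fun a => by
    rw [Nat.choose_symm_add, Nat.cast_choose_two]; push_cast; ring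
  norm_num only [Nat.add_zero, Nat.choose_self, hchoose_one, hchoose_two] at hdisc
  refine le_of_mul_le_mul_left ?_ (by positivity : (0 : ℝ) < (b + 1) * (k + 1))
  push_cast
  linear_combination hdisc

theorem meanH_mul_meanH_le_sq (n : ℕ) {k : ℕ} (hk : k + 2 ≤ n) (l : Fin n → ℝ) :
    meanH n k l * meanH n (k + 2) l ≤ meanH n (k + 1) l ^ 2 := by
  have hc : ∀ j ≤ n, (0 : ℝ) < n.choose j := fun j hj => Nat.cast_pos.mpr (Nat.choose_pos hj)
  have h1 : (n.choose (k + 1) : ℝ) * (k + 1) = n.choose k * (n - k) := by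
    rw [← Nat.cast_sub (by omega)]
    exact_mod_cast Nat.choose_succ_right_eq n k
  have h2 : (n.choose (k + 2) : ℝ) * (k + 2) = n.choose (k + 1) * (n - k - 1) := by
    rw [sub_sub, ← Nat.cast_add_one, ← Nat.cast_sub (by omega)]
    exact_mod_cast Nat.choose_succ_right_eq n (k + 1)
  have hnewton := esymm_mul_esymm_le n hk l
  set s₀ := esymm n k l
  set s₁ := esymm n (k + 1) l
  set s₂ := esymm n (k + 2) l
  have hw : (0 : ℝ) < (k + 1) * (n - k - 1) := by
    have : (k : ℝ) + 2 ≤ n := by exact_mod_cast hk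
    nlinarith
  rw [meanH, meanH, meanH, div_mul_div_comm, div_pow,
    div_le_div_iff₀ (mul_pos (hc k (by omega)) (hc (k + 2) hk)) (pow_pos (hc (k + 1) (by omega)) 2)]
  refine le_of_mul_le_mul_left ?_ hw
  calc (k + 1) * (n - k - 1) * (s₀ * s₂ * n.choose (k + 1) ^ 2)
      = n.choose k * n.choose (k + 2) * ((k + 2) * (n - k) * (s₀ * s₂)) := by
        linear_combination s₀ * s₂ * (n.choose (k + 1) * (n - k - 1)) * h1 -
          s₀ * s₂ * (n.choose k * (n - k)) * h2
    _ ≤ n.choose k * n.choose (k + 2) * ((k + 1) * (n - k - 1) * s₁ ^ 2) :=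
        mul_le_mul_of_nonneg_left hnewton (by positivity)
    _ = (k + 1) * (n - k - 1) * (s₁ ^ 2 * (n.choose k * n.choose (k + 2))) := by ring

theorem succ_pow_le_pow_succ_of_mul_le_sq {a : ℕ → ℝ} {m : ℕ} (h0 : a 0 = 1)
    (hpos : ∀ i ≤ m, 0 < a i) (hconc : ∀ i, i + 2 ≤ m → a i * a (i + 2) ≤ a (i + 1) ^ 2) :
    ∀ k < m, a (k + 1) ^ k ≤ a k ^ (k + 1) := by
  intro k hk
  induction k with
  | zero => simp [h0]
  | succ k ih =>
    have hk0 := hpos k (by omega)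
    have hk1 := hpos (k + 1) (by omega)
    have hk2 := hpos (k + 2) (by omega)
    refine le_of_mul_le_mul_right ?_ (pow_pos hk0 (k + 1))
    calc a (k + 2) ^ (k + 1) * a k ^ (k + 1) = (a k * a (k + 2)) ^ (k + 1) := by ring
      _ ≤ (a (k + 1) ^ 2) ^ (k + 1) := by gcongr; exact hconc k (by omega)
      _ = a (k + 1) ^ (k + 2) * a (k + 1) ^ k := by ring
      _ ≤ a (k + 1) ^ (k + 2) * a k ^ (k + 1) := by gcongr; exact ih (by omega)

theorem meanH_zero (n : ℕ) (l : Fin n → ℝ) : meanH n 0 l = 1 := by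
  simp [meanH, esymm_zero]

theorem meanH_pos {n j : ℕ} (hj : j ≤ n) {l : Fin n → ℝ} (h : 0 < esymm n j l) :
    0 < meanH n j l :=
  div_pos h (Nat.cast_pos.mpr (Nat.choose_pos hj))

theorem meanH_succ_pow_le_pow {n r : ℕ} (hr : r ≤ n) {l : Fin n → ℝ}
    (hl : ∀ j ≤ r, 0 ≤ esymm n j l) {k : ℕ} (hk : k < r) :
    meanH n (k + 1) l ^ k ≤ meanH n k l ^ (k + 1) := by
  let f : ℝ → ℝ := fun t => meanH n (k + 1) (fun i => l i + t) ^ k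
  let g : ℝ → ℝ := fun t => meanH n k (fun i => l i + t) ^ (k + 1)
  have hcont : ∀ j, Continuous fun t : ℝ => meanH n j (fun i => l i + t) := fun j =>
    ((continuous_esymm n j).comp (by fun_prop)).div_const _
  have hshift : Set.Ioi 0 ⊆ {t | f t ≤ g t} := fun t ht =>
    succ_pow_le_pow_succ_of_mul_le_sq (meanH_zero n _)
      (fun j hj => meanH_pos (hj.trans hr) (esymm_add_const_pos n (hj.trans hr)
        (fun i hi => hl i (hi.trans hj)) ht))
      (fun i hi => meanH_mul_meanH_le_sq n (hi.trans hr) _) k hk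
  have hclosed : IsClosed {t | f t ≤ g t} := isClosed_le ((hcont _).pow _) ((hcont _).pow _)
  have h0 : (0 : ℝ) ∈ closure (Set.Ioi 0) := by simp [closure_Ioi]
  simpa [f, g] using hclosed.closure_subset_iff.mpr hshift h0

theorem esymm_pos_of_nonneg {n r : ℕ} (hr : r ≤ n) {l : Fin n → ℝ}
    (hl : ∀ j ≤ r, 0 ≤ esymm n j l) (hr_pos : 0 < esymm n r l) : ∀ j ≤ r, 0 < esymm n j l := by
  intro j hj
  induction hj using Nat.decreasingInduction with
  | self => exact hr_pos
  | of_succ k hk ih =>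
    have hc : (0 : ℝ) < n.choose k := Nat.cast_pos.mpr (Nat.choose_pos (by omega))
    have hpow : 0 ^ (k + 1) < meanH n k l ^ (k + 1) := by
      rw [zero_pow k.succ_ne_zero]
      exact (pow_pos (meanH_pos (by omega) ih) k).trans_le (meanH_succ_pow_le_pow hr hl hk)
    exact (div_pos_iff_of_pos_right hc).mp
      (lt_of_pow_lt_pow_left₀ (k + 1) (div_nonneg (hl k hk.le) hc.le) hpow)

theorem gardingCone_subset_setOf_esymm_pos {n r : ℕ} (hr : r ≤ n) :
    gardingCone n r ⊆ {l | ∀ j ≤ r, 0 < esymm n j l} := by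
  have hopen : IsOpen {l : Fin n → ℝ | ∀ j ≤ r, 0 < esymm n j l} := by
    simp only [Set.ofPred_forall]
    exact (Set.finite_Iic r).isOpen_biInter fun j _ =>
      isOpen_lt continuous_const (continuous_esymm n j)
  have hone : (fun _ => 1 : Fin n → ℝ) ∈ {l | ∀ j ≤ r, 0 < esymm n j l} := fun j hj => by
    rw [esymm_const_one]
    exact Nat.cast_pos.mpr (Nat.choose_pos (hj.trans hr))
  refine isPreconnected_connectedComponentIn.subset_of_closure_inter_subset hopen
    ⟨_, mem_connectedComponentIn (hone r le_rfl), hone⟩ ?_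
  rintro l ⟨hcl, hl⟩
  have hnonneg : ∀ j ≤ r, 0 ≤ esymm n j l := fun j hj =>
    closure_minimal (fun m hm => (hm j hj).le)
      (isClosed_le continuous_const (continuous_esymm n j)) hcl
  have hr_pos : l ∈ {l | 0 < esymm n r l} := connectedComponentIn_subset _ _ hl
  exact esymm_pos_of_nonneg hr hnonneg hr_pos

theorem rpow_natCast_div_le_of_pow_le {x y : ℝ} (hx : 0 ≤ x) (hy : 0 ≤ y) {k m : ℕ}
    (hm : m ≠ 0) (h : x ^ k ≤ y ^ m) : x ^ ((k : ℝ) / m) ≤ y := by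
  rw [div_eq_mul_inv, Real.rpow_natCast_mul hx, ← Real.pow_rpow_inv_natCast hy hm]
  exact Real.rpow_le_rpow (pow_nonneg hx k) h (by positivity)

theorem meanH_pred_ge_rpow_general (n r : ℕ) (hr1 : 2 ≤ r) (hr : r ≤ n)
    (l : Fin n → ℝ) (hl : l ∈ gardingCone n r) :
    meanH n r l ^ (((r : ℝ) - 1) / (r : ℝ)) ≤ meanH n (r - 1) l ∧
    0 < meanH n r l ^ (((r : ℝ) - 1) / (r : ℝ)) := by
  obtain ⟨k, rfl⟩ : ∃ k, r = k + 1 := ⟨r - 1, by omega⟩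
  have hpos := gardingCone_subset_setOf_esymm_pos hr hl
  have hHr := meanH_pos hr (hpos (k + 1) le_rfl)
  have hHk := meanH_pos (by omega) (hpos k (by omega))
  have hmaclaurin := meanH_succ_pow_le_pow hr (fun j hj => (hpos j hj).le) (Nat.lt_succ_self k)
  rw [Nat.add_sub_cancel, show ((k + 1 : ℕ) : ℝ) - 1 = k by push_cast; ring]
  exact ⟨rpow_natCast_div_le_of_pow_le hHr.le hHk.le k.succ_ne_zero hmaclaurin,
    Real.rpow_pos_of_pos hHr _⟩

/-- For `n ≥ 2`, `2 ≤ r ≤ n` and `λ ∈ Γ_r`,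
`H_{r−1}(λ) ≥ H_r(λ)^{(r−1)/r} > 0`. -/
theorem meanH_pred_ge_rpow (n r : ℕ) (hn : 2 ≤ n) (hr1 : 2 ≤ r) (hr : r ≤ n)
    (l : Fin n → ℝ) (hl : l ∈ gardingCone n r) :
    meanH n r l ^ (((r : ℝ) - 1) / (r : ℝ)) ≤ meanH n (r - 1) l ∧
    0 < meanH n r l ^ (((r : ℝ) - 1) / (r : ℝ)) :=
  meanH_pred_ge_rpow_general n r hr1 hr l hl
end
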